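/- arXiv:1910.14186 — 6 statements merged into one kernel-verified Lean document; each statement's English description precedes it below -/
import Mathlib

section
/- Let z ∈ {0,1}^d be a random vector whose entries are i.i.d. Bernoulli(θ) with θ ∈ (0,1]. Then for matrices U ∈ ℝ^{a×d}, V ∈ ℝ^{b×d}, Y ∈ ℝ^{a×n}, X ∈ ℝ^{b×n}: E_z ‖Y − (1/θ) U diag(z) Vᵀ X‖_F² = ‖Y − U Vᵀ X‖_F² + ((1−θ)/θ) Σ_{i=1}^d ‖u_i‖₂² ‖Xᵀ v_i‖₂², where u_i, v_i are the i-th columns of U and V. -/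
/-!
Write `ξᵢ ∈ {0, 1}` for the dropout indicators. Independence gives `E ξᵢ = θ` and
`E ξᵢ ξⱼ = θ²` for `i ≠ j`, while `ξᵢ² = ξᵢ`. Expanding the square entrywise, the cross terms of
`(1/θ) ∑ᵢ cᵢ ξᵢ` average to those of `∑ᵢ cᵢ`, and the diagonal terms leave the excess
`(1/θ - 1) ∑ᵢ cᵢ²`. For the entry `(p, q)` one has `cᵢ = Uₚᵢ (VᵀX)ᵢq`, and summing `cᵢ²` over
`p` and `q` gives `‖uᵢ‖² ‖Xᵀvᵢ‖²`.
-/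

open Finset

def bernoulliWeight {ι : Type*} [Fintype ι] (θ : ℝ) (z : ι → Bool) : ℝ :=
  ∏ i, if z i then θ else 1 - θ

section Moments

variable {ι : Type*} [Fintype ι] [DecidableEq ι] (θ : ℝ)

theorem sum_bernoulliWeight_mul_prod (g : ι → Bool → ℝ) :
    ∑ z : ι → Bool, bernoulliWeight θ z * ∏ i, g i (z i)
      = ∏ i, (θ * g i true + (1 - θ) * g i false) := by
  simp only [bernoulliWeight, ← prod_mul_distrib]
  rw [← Fintype.prod_sum fun i b => (if b then θ else 1 - θ) * g i b]
  simp

theorem sum_bernoulliWeight_mul_prod_indicator (s : Finset ι) :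
    ∑ z : ι → Bool, bernoulliWeight θ z * ∏ i ∈ s, (if z i then (1 : ℝ) else 0) = θ ^ s.card := by
  have h := sum_bernoulliWeight_mul_prod θ fun i b =>
    if i ∈ s then (if b then (1 : ℝ) else 0) else 1
  simp only [Fintype.prod_ite_mem] at h
  rw [h, ← prod_const, ← Fintype.prod_ite_mem s]
  refine prod_congr rfl fun i _ => ?_
  by_cases hi : i ∈ s <;> simp [hi]

theorem sum_bernoulliWeight : ∑ z : ι → Bool, bernoulliWeight θ z = 1 := by
  simpa using sum_bernoulliWeight_mul_prod_indicator θ (∅ : Finset ι)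

theorem sum_bernoulliWeight_mul_indicator (i : ι) :
    ∑ z : ι → Bool, bernoulliWeight θ z * (if z i then (1 : ℝ) else 0) = θ := by
  simpa using sum_bernoulliWeight_mul_prod_indicator θ {i}

theorem sum_bernoulliWeight_mul_indicator_mul_indicator (i j : ι) :
    ∑ z : ι → Bool, bernoulliWeight θ z * ((if z i then (1 : ℝ) else 0) * (if z j then 1 else 0))
      = if i = j then θ else θ ^ 2 := by
  split_ifs with hij
  · subst hij
    simpa [← ite_and] using sum_bernoulliWeight_mul_indicator θ i
  · simpa [hij] using sum_bernoulliWeight_mul_prod_indicator θ {i, j}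

theorem sum_bernoulliWeight_mul_sq_sub (hθ : θ ≠ 0) (y : ℝ) (c : ι → ℝ) :
    ∑ z : ι → Bool,
        bernoulliWeight θ z * (y - (1 / θ) * ∑ i, c i * (if z i then (1 : ℝ) else 0)) ^ 2
      = (y - ∑ i, c i) ^ 2 + ((1 - θ) / θ) * ∑ i, c i ^ 2 := by
  have expand (z : ι → Bool) :
      bernoulliWeight θ z * (y - (1 / θ) * ∑ i, c i * (if z i then (1 : ℝ) else 0)) ^ 2
        = y ^ 2 * bernoulliWeight θ z
          - 2 * y / θ * ∑ i, c i * (bernoulliWeight θ z * (if z i then 1 else 0))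
          + 1 / θ ^ 2 * ∑ i, ∑ j, c i * c j *
              (bernoulliWeight θ z * ((if z i then 1 else 0) * (if z j then 1 else 0))) := by
    set S := ∑ i, c i * (if z i then (1 : ℝ) else 0)
    have linear :
        ∑ i, c i * (bernoulliWeight θ z * (if z i then 1 else 0)) = bernoulliWeight θ z * S := by
      rw [mul_sum]
      exact sum_congr rfl fun i _ => by ring
    have quadratic : ∑ i, ∑ j, c i * c j *
        (bernoulliWeight θ z * ((if z i then 1 else 0) * (if z j then 1 else 0)))
          = bernoulliWeight θ z * S ^ 2 := by
      rw [sq, sum_mul_sum, mul_sum]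
      refine sum_congr rfl fun i _ => ?_
      rw [mul_sum]
      exact sum_congr rfl fun j _ => by ring
    rw [linear, quadratic]
    field_simp
    ring
  have second_moment (i : ι) :
      ∑ j, c i * c j * (if i = j then θ else θ ^ 2)
        = θ ^ 2 * (c i * ∑ j, c j) + (θ - θ ^ 2) * c i ^ 2 := by
    have split (j : ι) : c i * c j * (if i = j then θ else θ ^ 2)
        = θ ^ 2 * (c i * c j) + if i = j then (θ - θ ^ 2) * c i ^ 2 else 0 := by
      split_ifs with h
      · subst h; ring
      · ring
    simp only [split, sum_add_distrib, ← mul_sum, sum_ite_eq, mem_univ, if_true]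
  simp only [expand, sum_add_distrib, sum_sub_distrib, ← mul_sum]
  simp_rw [sum_comm (s := (univ : Finset (ι → Bool))), ← mul_sum]
  simp only [sum_bernoulliWeight_mul_indicator, sum_bernoulliWeight_mul_indicator_mul_indicator,
    sum_bernoulliWeight, second_moment]
  simp only [sum_add_distrib, ← sum_mul, ← mul_sum]
  field_simp
  ring

end Moments

open Matrix in
theorem sum_bernoulliWeight_mul_frobenius_sq_sub {m k ι : Type*} [Fintype m] [Fintype k]
    [Fintype ι] [DecidableEq ι] {θ : ℝ} (hθ : θ ≠ 0)
    (Y : Matrix m k ℝ) (U : Matrix m ι ℝ) (W : Matrix ι k ℝ) :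
    ∑ z : ι → Bool, bernoulliWeight θ z *
      ∑ p, ∑ q, ((Y - (1 / θ) • (U * diagonal (fun i => if z i then (1 : ℝ) else 0) * W)) p q) ^ 2
      = ∑ p, ∑ q, ((Y - U * W) p q) ^ 2
        + ((1 - θ) / θ) * ∑ i, (∑ p, U p i ^ 2) * ∑ q, W i q ^ 2 := by
  have entry (e : ι → ℝ) (p : m) (q : k) :
      (U * diagonal e * W) p q = ∑ i, U p i * W i q * e i := by
    rw [mul_apply]
    exact sum_congr rfl fun i _ => by rw [mul_diagonal]; ring
  have entry_one (p : m) (q : k) : (U * W) p q = ∑ i, U p i * W i q := by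
    simpa using entry 1 p q
  calc _ = ∑ p, ∑ q, ∑ z : ι → Bool, bernoulliWeight θ z *
        ((Y - (1 / θ) • (U * diagonal (fun i => if z i then (1 : ℝ) else 0) * W)) p q) ^ 2 := by
        simp only [mul_sum]
        rw [sum_comm]
        exact sum_congr rfl fun p _ => sum_comm
    _ = _ := by
        simp only [Matrix.sub_apply, Matrix.smul_apply, smul_eq_mul, entry,
          sum_bernoulliWeight_mul_sq_sub θ hθ, sum_add_distrib, ← mul_sum, entry_one, mul_pow,
          sum_mul_sum]
        congr 2
        simp only [mul_sum]
        exact (sum_congr rfl fun p _ => sum_comm).trans sum_comm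

theorem stmt1_general (a b d n : ℕ) (θ : ℝ) (hθ0 : 0 < θ)
    (U : Matrix (Fin a) (Fin d) ℝ) (V : Matrix (Fin b) (Fin d) ℝ)
    (Y : Matrix (Fin a) (Fin n) ℝ) (X : Matrix (Fin b) (Fin n) ℝ) :
    ∑ z : Fin d → Bool, (∏ i, if z i then θ else 1 - θ) *
      (∑ p, ∑ q, ((Y - (1 / θ) •
        (U * Matrix.diagonal (fun i => if z i then (1 : ℝ) else 0) * V.transpose * X)) p q) ^ 2)
    = (∑ p, ∑ q, ((Y - U * V.transpose * X) p q) ^ 2)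
      + ((1 - θ) / θ) * ∑ i, (∑ p, (U p i) ^ 2) * (∑ q, (∑ p, X p q * V p i) ^ 2) := by
  have hVX (i : Fin d) (q : Fin n) : (V.transpose * X) i q = ∑ p, X p q * V p i := by
    simp only [Matrix.mul_apply, Matrix.transpose_apply, mul_comm]
  simp_rw [Matrix.mul_assoc _ V.transpose X]
  simpa only [bernoulliWeight, hVX] using
    sum_bernoulliWeight_mul_frobenius_sq_sub hθ0.ne' Y U (V.transpose * X)

/-- Dropout on a single hidden-layer linear network: the expected stochastic objective
equals the deterministic objective plus the Dropout regularizer. -/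
theorem stmt1 (a b d n : ℕ) (θ : ℝ) (hθ0 : 0 < θ) (hθ1 : θ ≤ 1)
    (U : Matrix (Fin a) (Fin d) ℝ) (V : Matrix (Fin b) (Fin d) ℝ)
    (Y : Matrix (Fin a) (Fin n) ℝ) (X : Matrix (Fin b) (Fin n) ℝ) :
    ∑ z : Fin d → Bool, (∏ i, if z i then θ else 1 - θ) *
      (∑ p, ∑ q, ((Y - (1 / θ) •
        (U * Matrix.diagonal (fun i => if z i then (1 : ℝ) else 0) * V.transpose * X)) p q) ^ 2)
    = (∑ p, ∑ q, ((Y - U * V.transpose * X) p q) ^ 2)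
      + ((1 - θ) / θ) * ∑ i, (∑ p, (U p i) ^ 2) * (∑ q, (∑ p, X p q * V p i) ^ 2) :=
  stmt1_general a b d n θ hθ0 U V Y X
end

section
/- Let z ∈ ℝ^d be a random vector with mean μ (all entries nonzero) and covariance matrix C with entries c_{ij}. Then for U ∈ ℝ^{a×d}, V ∈ ℝ^{n×d}, Y ∈ ℝ^{a×n}: E_z ‖Y − U diag(μ)^{-1} diag(z) Vᵀ‖_F² = ‖Y − U Vᵀ‖_F² + Σ_{i,j=1}^d c_{ij} (u_iᵀ u_j)(v_iᵀ v_j)/(μ_i μ_j). -/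
/-!
Write `z i / μ i = 1 + X i`, so that the `X i` are centred with covariance `c i j / (μ i μ j)`.
Each entry of the residual is then affine in `X`, namely `(Y - U Vᵀ) p q - ∑ i, U p i V q i X i`,
so its expected square is the deterministic square plus a quadratic form in the covariance of
`X`: the cross term vanishes because `X` is centred. Summing over the entries `p, q` turns the
coefficients `U p i V q i U p j V q j` into the product of the Gram entries `uᵢᵀuⱼ` and `vᵢᵀvⱼ`.
-/

open MeasureTheory Finset

section

variable {Ω : Type*} [MeasurableSpace Ω] {P : Measure Ω} {ι : Type*} [Fintype ι]

theorem integral_sq_sub_sum_mul_of_integral_eq_zero [IsProbabilityMeasure P]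
    {X : ι → Ω → ℝ} (hX : ∀ i, MemLp (X i) 2 P) (hX₀ : ∀ i, ∫ ω, X i ω ∂P = 0)
    (a : ℝ) (b : ι → ℝ) :
    ∫ ω, (a - ∑ i, b i * X i ω) ^ 2 ∂P
      = a ^ 2 + ∑ i, ∑ j, b i * b j * ∫ ω, X i ω * X j ω ∂P := by
  have hX₁ i : Integrable (X i) P := (hX i).integrable one_le_two
  have hXX i j : Integrable (fun ω => X i ω * X j ω) P := (hX i).integrable_mul (hX j)
  have hexpand ω : (a - ∑ i, b i * X i ω) ^ 2
      = a ^ 2 + (∑ i, -2 * a * b i * X i ω + ∑ i, ∑ j, b i * b j * (X i ω * X j ω)) := by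
    rw [sub_sq, sq (∑ i, _), sum_mul_sum, mul_sum, sub_eq_add_neg, ← sum_neg_distrib, add_assoc]
    congr 2 <;> refine sum_congr rfl fun i _ => ?_
    · ring
    · exact sum_congr rfl fun j _ => by ring
  have hlin : Integrable (fun ω => ∑ i, -2 * a * b i * X i ω) P :=
    integrable_finsetSum _ fun i _ => (hX₁ i).const_mul _
  have hquad : Integrable (fun ω => ∑ i, ∑ j, b i * b j * (X i ω * X j ω)) P :=
    integrable_finsetSum _ fun i _ => integrable_finsetSum _ fun j _ => (hXX i j).const_mul _
  have hsum : Integrable (fun ω => ∑ i, -2 * a * b i * X i ω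
      + ∑ i, ∑ j, b i * b j * (X i ω * X j ω)) P := hlin.add hquad
  simp_rw [hexpand]
  rw [integral_add (integrable_const _) hsum, integral_add hlin hquad,
    integral_finsetSum _ fun i _ => (hX₁ i).const_mul _,
    integral_finsetSum _ fun i _ => integrable_finsetSum _ fun j _ => (hXX i j).const_mul _]
  simp only [integral_const_mul, hX₀, mul_zero, sum_const_zero, zero_add, integral_const,
    probReal_univ, one_smul]
  exact congrArg _ (sum_congr rfl fun i _ => by
    rw [integral_finsetSum _ fun j _ => (hXX i j).const_mul _]
    simp only [integral_const_mul])

theorem integral_div_sub_one_of_integral_eq [IsProbabilityMeasure P] {f : Ω → ℝ} {m : ℝ}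
    (hf : Integrable f P) (hfm : ∫ ω, f ω ∂P = m) (hm : m ≠ 0) :
    ∫ ω, (f ω / m - 1) ∂P = 0 := by
  rw [integral_sub (hf.div_const m) (integrable_const 1), integral_div, hfm, div_self hm,
    integral_const, probReal_univ, one_smul, sub_self]

theorem integral_div_sub_one_mul_div_sub_one {f g : Ω → ℝ} {m m' : ℝ} (hm : m ≠ 0)
    (hm' : m' ≠ 0) :
    ∫ ω, (f ω / m - 1) * (g ω / m' - 1) ∂P = (∫ ω, (f ω - m) * (g ω - m') ∂P) / (m * m') := by
  rw [← integral_div]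
  congr with ω
  field_simp

end

theorem sub_mul_diagonal_mul_transpose_apply {R m n k : Type*} [CommRing R] [Fintype k]
    [DecidableEq k] (Y : Matrix m n R) (U : Matrix m k R) (V : Matrix n k R) (w : k → R)
    (p : m) (q : n) :
    (Y - U * Matrix.diagonal w * V.transpose) p q
      = (Y - U * V.transpose) p q - ∑ i, U p i * V q i * (w i - 1) := by
  rw [Matrix.sub_apply, Matrix.sub_apply, Matrix.mul_apply, Matrix.mul_apply]
  simp only [Matrix.mul_diagonal, Matrix.transpose_apply]
  rw [sub_sub, ← sum_add_distrib]
  exact congrArg _ (sum_congr rfl fun i _ => by ring)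

theorem sum_sum_sum_sum_outer_mul_outer {R m n k : Type*} [CommSemiring R] [Fintype m]
    [Fintype n] [Fintype k] (U : Matrix m k R) (V : Matrix n k R) (f : k → k → R) :
    ∑ p, ∑ q, ∑ i, ∑ j, U p i * V q i * (U p j * V q j) * f i j
      = ∑ i, ∑ j, (∑ p, U p i * U p j) * (∑ q, V q i * V q j) * f i j := by
  simp_rw [sum_mul_sum, sum_mul]
  simp_rw [sum_comm (s := (univ : Finset n)) (t := (univ : Finset k)),
    sum_comm (s := (univ : Finset m)) (t := (univ : Finset k))]
  exact sum_congr rfl fun i _ => sum_congr rfl fun j _ => sum_congr rfl fun p _ =>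
    sum_congr rfl fun q _ => by ring

/-- Generalized Dropout: for a random vector `z` with mean `μv` (entrywise nonzero) and
covariance `c`, the expected stochastic objective equals the deterministic objective plus
the generalized Dropout regularizer `Σ_{i,j} c_{ij} (u_iᵀu_j)(v_iᵀv_j)/(μ_i μ_j)`. -/
theorem stmt3 {Ω : Type*} [MeasurableSpace Ω] (P : Measure Ω) [IsProbabilityMeasure P]
    (a n d : ℕ) (z : Ω → Fin d → ℝ) (hz : ∀ i, MemLp (fun ω => z ω i) 2 P)
    (μv : Fin d → ℝ) (hμ : ∀ i, μv i ≠ 0) (hμdef : ∀ i, μv i = ∫ ω, z ω i ∂P)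
    (c : Fin d → Fin d → ℝ)
    (hc : ∀ i j, c i j = ∫ ω, (z ω i - μv i) * (z ω j - μv j) ∂P)
    (U : Matrix (Fin a) (Fin d) ℝ) (V : Matrix (Fin n) (Fin d) ℝ)
    (Y : Matrix (Fin a) (Fin n) ℝ) :
    ∫ ω, (∑ p, ∑ q,
        ((Y - U * Matrix.diagonal (fun i => z ω i / μv i) * V.transpose) p q) ^ 2) ∂P
    = (∑ p, ∑ q, ((Y - U * V.transpose) p q) ^ 2)
      + ∑ i, ∑ j, c i j * ((∑ p, U p i * U p j) * (∑ q, V q i * V q j)) / (μv i * μv j) := by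
  set X : Fin d → Ω → ℝ := fun i ω => z ω i / μv i - 1
  have hX i : MemLp (X i) 2 P := by
    have h : X i = fun ω => z ω i * (μv i)⁻¹ - 1 := by simp only [X, div_eq_mul_inv]
    exact h ▸ ((hz i).mul_const (μv i)⁻¹).sub (memLp_const 1)
  have hX₀ i : ∫ ω, X i ω ∂P = 0 :=
    integral_div_sub_one_of_integral_eq ((hz i).integrable one_le_two) (hμdef i).symm (hμ i)
  have hXX i j : ∫ ω, X i ω * X j ω ∂P = c i j / (μv i * μv j) :=
    (integral_div_sub_one_mul_div_sub_one (hμ i) (hμ j)).trans (by rw [hc])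
  have hsq p q : Integrable
      (fun ω => ((Y - U * V.transpose) p q - ∑ i, U p i * V q i * X i ω) ^ 2) P := by
    have hsum : MemLp (fun ω => ∑ i, U p i * V q i * X i ω) 2 P :=
      memLp_finsetSum univ fun i _ => (hX i).const_mul (U p i * V q i)
    exact ((memLp_const _).sub hsum).integrable_sq
  have hentry ω p q : (Y - U * Matrix.diagonal (fun i => z ω i / μv i) * V.transpose) p q
      = (Y - U * V.transpose) p q - ∑ i, U p i * V q i * X i ω :=
    sub_mul_diagonal_mul_transpose_apply Y U V _ p q
  simp_rw [hentry]
  rw [integral_finsetSum _ fun p _ => integrable_finsetSum _ fun q _ => hsq p q]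
  simp_rw [integral_finsetSum _ fun q _ => hsq _ q,
    integral_sq_sub_sum_mul_of_integral_eq_zero hX hX₀, hXX, sum_add_distrib,
    sum_sum_sum_sum_outer_mul_outer]
  exact congrArg _ (sum_congr rfl fun i _ => sum_congr rfl fun j _ => by ring)
end

section
/- For U ∈ ℝ^{a×d}, V ∈ ℝ^{b×d}, X ∈ ℝ^{b×n}, define Ω(U,V) = Σ_{i=1}^{d/r} ‖U_i V_iᵀ X‖_F² where U_i, V_i are consecutive column blocks of width r. If Ū = (1/√2)[U U] and V̄ = (1/√2)[V V] (concatenation along columns), then Ū V̄ᵀ X = U Vᵀ X and Ω(Ū, V̄) = (1/2) Ω(U, V). -/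
/-!
`Ū` is `(1/√2) • dupCols U`, where `dupCols` repeats every column block twice. Duplication
doubles both `U Vᵀ` and the regularizer `Ω`, while the rescaling multiplies `U Vᵀ` by `1/2`
and `Ω`, which is quadratic in it, by `1/4`.
-/

namespace Matrix

variable {R : Type*} [CommSemiring R] {m l n κ ρ : Type*}
  [Fintype κ] [Fintype ρ]

/-- Column `(i, s)` is column `s` of block `i`; `((e, i), s)` is its copy number `e`. -/
def dupCols (A : Matrix m (κ × ρ) R) : Matrix m ((Bool × κ) × ρ) R :=
  A.submatrix id fun c => (c.1.2, c.2)

omit [CommSemiring R] [Fintype κ] [Fintype ρ] in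
@[simp]
lemma dupCols_apply (A : Matrix m (κ × ρ) R) (p : m) (e : Bool) (i : κ) (s : ρ) :
    dupCols A p ((e, i), s) = A p (i, s) := rfl

lemma dupCols_mul_transpose (A : Matrix m (κ × ρ) R) (B : Matrix l (κ × ρ) R) :
    dupCols A * (dupCols B)ᵀ = (2 : R) • (A * Bᵀ) := by
  ext p q
  simp only [mul_apply, transpose_apply, smul_apply, Fintype.sum_prod_type, Fintype.sum_bool,
    dupCols_apply, smul_eq_mul, two_mul]

variable [Fintype m] [Fintype l] [Fintype n]

/-- `Ω(U, V) = ∑ᵢ ‖Uᵢ Vᵢᵀ X‖_F²`, with `Uᵢ`, `Vᵢ` the `i`-th column blocks. -/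
def dropBlockReg (U : Matrix m (κ × ρ) R) (V : Matrix l (κ × ρ) R) (X : Matrix l n R) : R :=
  ∑ i, ∑ p, ∑ q, (∑ s, U p (i, s) * ∑ j, V j (i, s) * X j q) ^ 2

lemma dropBlockReg_smul_smul (c d : R) (U : Matrix m (κ × ρ) R) (V : Matrix l (κ × ρ) R)
    (X : Matrix l n R) : dropBlockReg (c • U) (d • V) X = (c * d) ^ 2 * dropBlockReg U V X := by
  simp only [dropBlockReg, smul_apply, smul_eq_mul, Finset.mul_sum, ← mul_pow]
  congr! 4 with i - p - q - s -
  simp only [mul_assoc, mul_left_comm _ d]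

lemma dropBlockReg_dupCols (U : Matrix m (κ × ρ) R) (V : Matrix l (κ × ρ) R) (X : Matrix l n R) :
    dropBlockReg (dupCols U) (dupCols V) X = 2 * dropBlockReg U V X := by
  simp only [dropBlockReg, Fintype.sum_prod_type, Fintype.sum_bool, dupCols_apply, two_mul]

end Matrix

open Matrix

/-- Duplicating the factors with a `1/√2` rescaling preserves the product `U Vᵀ X`
but halves the DropBlock regularizer `Ω(U,V) = Σ_i ‖U_i V_iᵀ X‖_F²`.
Columns are indexed by `Fin k × Fin r` (blocks of width `r`), and the duplicated
factors by `(Bool × Fin k) × Fin r` (two copies of each block). -/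
theorem stmt6 (a b n k r : ℕ)
    (U : Matrix (Fin a) (Fin k × Fin r) ℝ) (V : Matrix (Fin b) (Fin k × Fin r) ℝ)
    (X : Matrix (Fin b) (Fin n) ℝ)
    (Ubar : Matrix (Fin a) ((Bool × Fin k) × Fin r) ℝ)
    (Vbar : Matrix (Fin b) ((Bool × Fin k) × Fin r) ℝ)
    (hU : ∀ p e i s, Ubar p ((e, i), s) = U p (i, s) / Real.sqrt 2)
    (hV : ∀ l e i s, Vbar l ((e, i), s) = V l (i, s) / Real.sqrt 2) :
    Ubar * Vbar.transpose * X = U * V.transpose * X ∧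
    (∑ c : Bool × Fin k, ∑ p, ∑ q,
        (∑ s : Fin r, Ubar p (c, s) * (∑ l, Vbar l (c, s) * X l q)) ^ 2)
      = (1 / 2) * ∑ i : Fin k, ∑ p, ∑ q,
        (∑ s : Fin r, U p (i, s) * (∑ l, V l (i, s) * X l q)) ^ 2 := by
  have hUbar : Ubar = (√2)⁻¹ • dupCols U := by
    ext p ⟨⟨e, i⟩, s⟩; simp [hU, div_eq_inv_mul]
  have hVbar : Vbar = (√2)⁻¹ • dupCols V := by
    ext j ⟨⟨e, i⟩, s⟩; simp [hV, div_eq_inv_mul]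
  have hscale : (√2)⁻¹ * (√2)⁻¹ * (2 : ℝ) = 1 := by
    rw [← mul_inv, Real.mul_self_sqrt zero_le_two, inv_mul_cancel₀ two_ne_zero]
  constructor
  · rw [hUbar, hVbar, transpose_smul, Matrix.smul_mul, Matrix.mul_smul, dupCols_mul_transpose,
      smul_smul, smul_smul, hscale, one_smul]
  · change dropBlockReg Ubar Vbar X = 1 / 2 * dropBlockReg U V X
    rw [hUbar, hVbar, dropBlockReg_smul_smul, dropBlockReg_dupCols, ← mul_assoc]
    congr 1
    rw [mul_pow, inv_pow, Real.sq_sqrt zero_le_two]; norm_num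
end

section
/- Let f: matrices → ℝ be defined by f(A) = inf over d and factorizations A = U Vᵀ X of (Σ_{i=1}^{d/r} ‖U_i V_iᵀ X‖_F)². Then the function ω(A) = inf over factorizations of Σ_i ‖U_i V_iᵀ X‖_F is positively homogeneous and subadditive (a gauge), and hence f = ω² is convex. -/
/-!
Call the matrices `U' V'ᵀ X` with `U', V'` of width `r` atoms. A factorization `A = U Vᵀ X` into
`k` blocks of width `r` is the same as a decomposition of `A` into `k` atoms, costing the sum of
their Frobenius norms, so `ω` is the infimum of the costs of atomic decompositions of `A`. Since the
atoms form a cone, rescaling a decomposition of `A` by `c ≥ 0` gives one of `c • A` and multiplies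
its cost by `c`; concatenating decompositions of `A` and `B` gives one of `A + B`. Every `A` has a
decomposition because `X` has a left inverse `Y`, so `A = (A Y) X` is a sum of rank-one atoms;
subadditivity needs this, as `sInf ∅ = 0`. A nonnegative, positively homogeneous, subadditive
function is convex, and so is its square.
-/

open scoped Pointwise Matrix

section AtomicGauge

variable {E : Type*} [SeminormedAddCommGroup E]

def atomicCosts (R : Set E) (x : E) : Set ℝ :=
  {t | ∃ (k : ℕ) (_ : 1 ≤ k) (w : Fin k → E), (∀ i, w i ∈ R) ∧ ∑ i, w i = x ∧ t = ∑ i, ‖w i‖}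

noncomputable def atomicGauge (R : Set E) (x : E) : ℝ :=
  sInf (atomicCosts R x)

variable {R : Set E}

lemma nonneg_of_mem_atomicCosts {x : E} {t : ℝ} (ht : t ∈ atomicCosts R x) : 0 ≤ t := by
  obtain ⟨k, -, w, -, -, rfl⟩ := ht
  positivity

lemma bddBelow_atomicCosts (x : E) : BddBelow (atomicCosts R x) :=
  ⟨0, fun _ => nonneg_of_mem_atomicCosts⟩

lemma norm_mem_atomicCosts {x : E} (hx : x ∈ R) : ‖x‖ ∈ atomicCosts R x :=
  ⟨1, le_rfl, fun _ => x, fun _ => hx, by simp, by simp⟩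

lemma add_mem_atomicCosts {x y : E} {s t : ℝ} (hs : s ∈ atomicCosts R x)
    (ht : t ∈ atomicCosts R y) : s + t ∈ atomicCosts R (x + y) := by
  obtain ⟨k, hk, v, hvR, rfl, rfl⟩ := hs
  obtain ⟨l, -, w, hwR, rfl, rfl⟩ := ht
  refine ⟨k + l, hk.trans (Nat.le_add_right k l), Fin.append v w,
    Fin.addCases (by simpa using hvR) (by simpa using hwR), ?_, ?_⟩ <;>
    simp [Fin.sum_univ_add]

lemma atomicCosts_nonempty_sum (h0 : (0 : E) ∈ R) {ι : Type*} (s : Finset ι) {f : ι → E}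
    (hf : ∀ i ∈ s, (atomicCosts R (f i)).Nonempty) : (atomicCosts R (∑ i ∈ s, f i)).Nonempty :=
  Finset.sum_induction f (fun x => (atomicCosts R x).Nonempty)
    (fun _ _ ⟨s, hs⟩ ⟨t, ht⟩ => ⟨s + t, add_mem_atomicCosts hs ht⟩)
    ⟨_, norm_mem_atomicCosts h0⟩ hf

lemma atomicGauge_nonneg (x : E) : 0 ≤ atomicGauge R x :=
  Real.sInf_nonneg fun _ => nonneg_of_mem_atomicCosts

lemma atomicGauge_zero (h0 : (0 : E) ∈ R) : atomicGauge R 0 = 0 :=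
  le_antisymm (csInf_le (bddBelow_atomicCosts 0) (by simpa using norm_mem_atomicCosts h0))
    (atomicGauge_nonneg 0)

lemma atomicGauge_add_le (hne : ∀ x, (atomicCosts R x).Nonempty) (x y : E) :
    atomicGauge R (x + y) ≤ atomicGauge R x + atomicGauge R y := by
  rw [atomicGauge, atomicGauge, atomicGauge,
    ← csInf_add (hne x) (bddBelow_atomicCosts x) (hne y) (bddBelow_atomicCosts y)]
  exact csInf_le_csInf (bddBelow_atomicCosts _) ((hne x).add (hne y))
    (Set.add_subset_iff.mpr fun _ hs _ ht => add_mem_atomicCosts hs ht)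

variable [NormedSpace ℝ E]

lemma smul_mem_atomicCosts (hR : ∀ c : ℝ, 0 ≤ c → ∀ x ∈ R, c • x ∈ R) {x : E} {t : ℝ}
    (ht : t ∈ atomicCosts R x) {c : ℝ} (hc : 0 ≤ c) : c * t ∈ atomicCosts R (c • x) := by
  obtain ⟨k, hk, w, hwR, rfl, rfl⟩ := ht
  exact ⟨k, hk, c • w, fun i => hR c hc _ (hwR i), by simp [Finset.smul_sum],
    by simp [norm_smul, Finset.mul_sum, abs_of_nonneg hc]⟩

lemma atomicCosts_smul (hR : ∀ c : ℝ, 0 ≤ c → ∀ x ∈ R, c • x ∈ R) {c : ℝ} (hc : 0 < c)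
    (x : E) : atomicCosts R (c • x) = c • atomicCosts R x := by
  ext t
  refine ⟨fun ht => ⟨c⁻¹ * t, ?_, by simp [hc.ne']⟩, ?_⟩
  · simpa [smul_smul, hc.ne'] using smul_mem_atomicCosts hR ht (inv_nonneg.mpr hc.le)
  · rintro ⟨s, hs, rfl⟩
    exact smul_mem_atomicCosts hR hs hc.le

lemma atomicGauge_smul (hR : ∀ c : ℝ, 0 ≤ c → ∀ x ∈ R, c • x ∈ R) (h0 : (0 : E) ∈ R)
    {c : ℝ} (hc : 0 ≤ c) (x : E) : atomicGauge R (c • x) = c * atomicGauge R x := by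
  rcases hc.eq_or_lt with rfl | hc
  · simp [atomicGauge_zero h0]
  · rw [atomicGauge, atomicCosts_smul hR hc, Real.sInf_smul_of_nonneg hc.le, smul_eq_mul,
      atomicGauge]

end AtomicGauge

lemma convexOn_univ_of_add_le_of_smul_eq {E : Type*} [AddCommGroup E] [Module ℝ E] {f : E → ℝ}
    (hadd : ∀ x y, f (x + y) ≤ f x + f y) (hsmul : ∀ c : ℝ, 0 ≤ c → ∀ x, f (c • x) = c * f x) :
    ConvexOn ℝ Set.univ f :=
  ⟨convex_univ, fun x _ y _ a b ha hb _ => by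
    simpa only [hsmul a ha, hsmul b hb, smul_eq_mul] using hadd (a • x) (b • y)⟩

theorem Matrix.exists_mul_eq_one_of_rank_eq_card {K m n : Type*} [Field K] [Fintype m]
    [Fintype n] [DecidableEq n] (X : Matrix m n K) (hX : X.rank = Fintype.card n) :
    ∃ Y : Matrix n m K, Y * X = 1 := by
  classical
  have hker : LinearMap.ker X.mulVecLin = ⊥ := by
    have := X.mulVecLin.finrank_range_add_finrank_ker
    rw [← Matrix.rank, hX, Module.finrank_fintype_fun_eq_card] at this
    exact Submodule.finrank_eq_zero.mp (by omega)
  obtain ⟨g, hg⟩ := X.mulVecLin.exists_leftInverse_of_injective hker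
  refine ⟨LinearMap.toMatrix' g, Matrix.toLin'.injective ?_⟩
  rw [Matrix.toLin'_mul, Matrix.toLin'_toMatrix', Matrix.toLin'_one]
  exact hg

theorem Matrix.mul_transpose_eq_sum_blocks {R l m κ ρ : Type*} [NonUnitalNonAssocSemiring R]
    [Fintype κ] [Fintype ρ] (U : Matrix l (κ × ρ) R) (V : Matrix m (κ × ρ) R) :
    U * Vᵀ = ∑ i, U.submatrix id (Prod.mk i) * (V.submatrix id (Prod.mk i))ᵀ := by
  ext p q
  simp [Matrix.mul_apply, Matrix.sum_apply, Fintype.sum_prod_type]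

attribute [local instance] Matrix.frobeniusSeminormedAddCommGroup Matrix.frobeniusNormedSpace

theorem Matrix.frobenius_norm_eq_sqrt {m n : Type*} [Fintype m] [Fintype n] (A : Matrix m n ℝ) :
    ‖A‖ = √(∑ i, ∑ j, A i j ^ 2) := by
  simp [Matrix.frobenius_norm_def, Real.sqrt_eq_rpow]

section BlockProducts

variable {m β ν : Type*} [Fintype β] (ρ : Type*) [Fintype ρ]

def blockProducts (X : Matrix β ν ℝ) : Set (Matrix m ν ℝ) :=
  {M | ∃ (U : Matrix m ρ ℝ) (V : Matrix β ρ ℝ), U * Vᵀ * X = M}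

variable {ρ}

lemma zero_mem_blockProducts (X : Matrix β ν ℝ) : (0 : Matrix m ν ℝ) ∈ blockProducts ρ X :=
  ⟨0, 0, by simp⟩

lemma smul_mem_blockProducts {X : Matrix β ν ℝ} (c : ℝ) {M : Matrix m ν ℝ}
    (hM : M ∈ blockProducts ρ X) : c • M ∈ blockProducts ρ X := by
  obtain ⟨U, V, rfl⟩ := hM
  exact ⟨c • U, V, by simp [Matrix.smul_mul]⟩

lemma single_mul_mem_blockProducts [DecidableEq m] [DecidableEq β] [DecidableEq ρ] (s : ρ)
    (X : Matrix β ν ℝ) (p : m) (l : β) (c : ℝ) : Matrix.single p l c * X ∈ blockProducts ρ X :=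
  ⟨Matrix.single p s c, Matrix.single l s 1, by
    simp [Matrix.transpose_single, Matrix.single_mul_single_same]⟩

lemma atomicCosts_blockProducts_nonempty [Fintype m] [Fintype ν] [DecidableEq ν] (s : ρ)
    {X : Matrix β ν ℝ} {Y : Matrix ν β ℝ} (hY : Y * X = 1) (A : Matrix m ν ℝ) :
    (atomicCosts (blockProducts ρ X) A).Nonempty := by
  classical
  have hA : A = ∑ p, ∑ l, Matrix.single p l ((A * Y) p l) * X := by
    calc A = A * Y * X := by rw [Matrix.mul_assoc, hY, Matrix.mul_one]
      _ = _ := by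
        conv_lhs => rw [Matrix.matrix_eq_sum_single (A * Y)]
        simp only [Matrix.sum_mul]
  rw [hA]
  exact atomicCosts_nonempty_sum (zero_mem_blockProducts X) _ fun p _ =>
    atomicCosts_nonempty_sum (zero_mem_blockProducts X) _ fun l _ =>
      ⟨_, norm_mem_atomicCosts (single_mul_mem_blockProducts s X p l _)⟩

end BlockProducts

section Factorization

variable {a b n r : ℕ}

def factorizationCosts (r : ℕ) (X : Matrix (Fin b) (Fin n) ℝ) (A : Matrix (Fin a) (Fin n) ℝ) :
    Set ℝ :=
  { t : ℝ | ∃ (k : ℕ) (_ : 1 ≤ k)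
      (U : Matrix (Fin a) (Fin k × Fin r) ℝ) (V : Matrix (Fin b) (Fin k × Fin r) ℝ),
      U * V.transpose * X = A ∧
      t = ∑ i : Fin k, Real.sqrt (∑ p, ∑ q,
        (∑ s : Fin r, U p (i, s) * (∑ l, V l (i, s) * X l q)) ^ 2) }

lemma norm_block_mul_transpose_mul {k : ℕ} (X : Matrix (Fin b) (Fin n) ℝ)
    (U : Matrix (Fin a) (Fin k × Fin r) ℝ) (V : Matrix (Fin b) (Fin k × Fin r) ℝ) (i : Fin k) :
    ‖U.submatrix id (Prod.mk i) * (V.submatrix id (Prod.mk i))ᵀ * X‖ =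
      √(∑ p, ∑ q, (∑ s : Fin r, U p (i, s) * (∑ l, V l (i, s) * X l q)) ^ 2) := by
  rw [Matrix.frobenius_norm_eq_sqrt, Matrix.mul_assoc]
  rfl

lemma factorizationCosts_eq_atomicCosts (r : ℕ) (X : Matrix (Fin b) (Fin n) ℝ)
    (A : Matrix (Fin a) (Fin n) ℝ) :
    factorizationCosts r X A = atomicCosts (blockProducts (Fin r) X) A := by
  ext t
  constructor
  · rintro ⟨k, hk, U, V, rfl, rfl⟩
    refine ⟨k, hk, fun i => U.submatrix id (Prod.mk i) * (V.submatrix id (Prod.mk i))ᵀ * X,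
      fun i => ⟨_, _, rfl⟩, ?_, ?_⟩
    · rw [Matrix.mul_transpose_eq_sum_blocks, Matrix.sum_mul]
    · simp only [norm_block_mul_transpose_mul]
  · rintro ⟨k, hk, w, hw, rfl, rfl⟩
    choose U V hUV using hw
    refine ⟨k, hk, Matrix.of fun p x => U x.1 p x.2, Matrix.of fun l x => V x.1 l x.2, ?_, ?_⟩
    · rw [Matrix.mul_transpose_eq_sum_blocks, Matrix.sum_mul,
        ← Finset.sum_congr rfl fun i _ => hUV i]
      rfl
    · rw [← Finset.sum_congr rfl fun i _ => congrArg norm (hUV i)]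
      simp only [← norm_block_mul_transpose_mul]
      rfl

end Factorization

/-- The function `ω(A) = inf over factorizations A = U Vᵀ X of Σ_i ‖U_i V_iᵀ X‖_F`
is positively homogeneous and subadditive (a gauge), and hence `ω²` is convex. -/
theorem stmt8 (a b n r : ℕ) (hr : 1 ≤ r)
    (X : Matrix (Fin b) (Fin n) ℝ) (hX : X.rank = n)
    (ω : Matrix (Fin a) (Fin n) ℝ → ℝ)
    (hω : ∀ A, ω A = sInf { t : ℝ | ∃ (k : ℕ) (_ : 1 ≤ k)
        (U : Matrix (Fin a) (Fin k × Fin r) ℝ) (V : Matrix (Fin b) (Fin k × Fin r) ℝ),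
        U * V.transpose * X = A ∧
        t = ∑ i : Fin k, Real.sqrt (∑ p, ∑ q,
          (∑ s : Fin r, U p (i, s) * (∑ l, V l (i, s) * X l q)) ^ 2) }) :
    (∀ (c : ℝ), 0 ≤ c → ∀ A, ω (c • A) = c * ω A) ∧
    (∀ A B, ω (A + B) ≤ ω A + ω B) ∧
    ConvexOn ℝ Set.univ (fun A => (ω A) ^ 2) := by
  have hω' : ω = atomicGauge (blockProducts (Fin r) X) :=
    funext fun A => (hω A).trans (congrArg sInf (factorizationCosts_eq_atomicCosts r X A))
  obtain ⟨Y, hY⟩ := X.exists_mul_eq_one_of_rank_eq_card (hX.trans (Fintype.card_fin n).symm)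
  have hsmul : ∀ c : ℝ, 0 ≤ c → ∀ A, ω (c • A) = c * ω A := by
    rw [hω']
    exact fun c => atomicGauge_smul (fun c _ _ => smul_mem_blockProducts c)
      (zero_mem_blockProducts X)
  have hadd : ∀ A B, ω (A + B) ≤ ω A + ω B := by
    rw [hω']
    exact atomicGauge_add_le (atomicCosts_blockProducts_nonempty ⟨0, hr⟩ hY)
  have hconvex := convexOn_univ_of_add_le_of_smul_eq hadd hsmul
  exact ⟨hsmul, hadd, hconvex.pow (fun A _ => hω' ▸ atomicGauge_nonneg A) 2⟩
end

section
/- For α ∈ ℝ^d with nonnegative entries, define the vector of normalized blocks and the replication construction: given d̂ > 0, set r_i = ⌊(α_i/‖α‖₁) d̂⌋ and γ_i = (α_i/‖α‖₁) d̂ − r_i. Then Σ_i r_i ≤ d̂, and the quantity (d̂ + d) [(‖α‖₁/d̂)² Σ_i r_i + Σ_i (γ_i ‖α‖₁/d̂)²] is strictly less than ((d̂+d)/d̂)² ‖α‖₁². -/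
open Finset

/-! Write `x_i = (α_i/‖α‖₁) d̂`, so that `Σ x_i = d̂`, `r_i = ⌊x_i⌋` and `γ_i = x_i - r_i ∈ [0,1)`.
Since `γ_i² ≤ γ_i`, we get `Σ r_i + Σ γ_i² ≤ Σ x_i = d̂`, so the left-hand side is at most
`(d̂+d) ‖α‖₁² / d̂`, which is strictly smaller than `(d̂+d)² ‖α‖₁² / d̂²` because `d > 0`. -/

theorem Nat.floor_add_sq_sub_floor_le {K : Type*} [Field K] [LinearOrder K] [IsStrictOrderedRing K]
    [FloorSemiring K] {x : K} (hx : 0 ≤ x) : (⌊x⌋₊ : K) + (x - ⌊x⌋₊) ^ 2 ≤ x := by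
  have h0 : 0 ≤ x - ⌊x⌋₊ := sub_nonneg.mpr (Nat.floor_le hx)
  have h1 : x - ⌊x⌋₊ < 1 := sub_lt_iff_lt_add'.mpr (Nat.lt_floor_add_one x)
  nlinarith

theorem Finset.sum_div_sum_mul {ι K : Type*} [Fintype ι] [Field K] (α : ι → K)
    (hα : ∑ j, α j ≠ 0) (c : K) : ∑ i, α i / (∑ j, α j) * c = c := by
  rw [← Finset.sum_mul, ← Finset.sum_div, div_self hα, one_mul]

theorem mul_div_sq_mul_lt_div_sq_mul {D d S t : ℝ} (hD : 0 < D) (hd : 0 < d) (hS : 0 < S)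
    (ht : t ≤ D) : (D + d) * ((S / D) ^ 2 * t) < ((D + d) / D) ^ 2 * S ^ 2 :=
  calc (D + d) * ((S / D) ^ 2 * t) ≤ (D + d) * ((S / D) ^ 2 * D) := by gcongr
    _ = (D + d) * S ^ 2 / D := by field_simp
    _ < (D + d) / D * ((D + d) * S ^ 2 / D) := by
      rw [lt_mul_iff_one_lt_left (by positivity), one_lt_div hD]
      linarith
    _ = ((D + d) / D) ^ 2 * S ^ 2 := by ring

/-- Key inequality in the balancing argument: with `r_i = ⌊(α_i/‖α‖₁) d̂⌋` and
`γ_i = (α_i/‖α‖₁) d̂ − r_i`, one has `Σ r_i ≤ d̂` and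
`(d̂+d)[(‖α‖₁/d̂)² Σ r_i + Σ (γ_i ‖α‖₁/d̂)²] < ((d̂+d)/d̂)² ‖α‖₁²`. -/
theorem stmt10 (d : ℕ) (α : Fin d → ℝ) (hα : ∀ i, 0 ≤ α i) (hne : α ≠ 0)
    (dh : ℕ) (hdh : 0 < dh)
    (rr : Fin d → ℕ) (hr : ∀ i, rr i = ⌊(α i / (∑ j, α j)) * dh⌋₊)
    (γ : Fin d → ℝ) (hγ : ∀ i, γ i = (α i / (∑ j, α j)) * dh - rr i) :
    ((∑ i, (rr i : ℝ)) ≤ dh) ∧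
    ((dh + d : ℝ) * (((∑ j, α j) / dh) ^ 2 * (∑ i, (rr i : ℝ))
        + ∑ i, (γ i * (∑ j, α j) / dh) ^ 2)
      < (((dh : ℝ) + d) / dh) ^ 2 * (∑ j, α j) ^ 2) := by
  set S := ∑ j, α j
  obtain ⟨i₀, hi₀⟩ := Function.ne_iff.mp hne
  have hS : 0 < S := Finset.sum_pos' (fun j _ => hα j) ⟨i₀, mem_univ _, (hα i₀).lt_of_ne' hi₀⟩
  have hx : ∀ i, 0 ≤ α i / S * dh := fun i => by have := hα i; positivity
  have hsum : ∑ i, (rr i : ℝ) + ∑ i, γ i ^ 2 ≤ dh := by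
    calc ∑ i, (rr i : ℝ) + ∑ i, γ i ^ 2 ≤ ∑ i, α i / S * dh := by
          rw [← sum_add_distrib]
          refine sum_le_sum fun i _ => ?_
          rw [hγ i, hr i]
          exact Nat.floor_add_sq_sub_floor_le (hx i)
      _ = dh := sum_div_sum_mul α hS.ne' _
  have hγsq : ∑ i, (γ i * S / dh) ^ 2 = (S / dh) ^ 2 * ∑ i, γ i ^ 2 := by
    rw [mul_sum]
    exact sum_congr rfl fun i _ => by ring
  refine ⟨by linarith [sum_nonneg fun i (_ : i ∈ univ) => sq_nonneg (γ i)], ?_⟩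
  rw [hγsq, ← mul_add]
  exact mul_div_sq_mul_lt_div_sq_mul (by positivity) (by exact_mod_cast i₀.pos) hS hsum
end

section
/- Fix β > 0, an integer r ≥ 1, and a ∈ ℝ^d with a₁ ≥ a₂ ≥ ... ≥ a_d ≥ 0. For ρ ∈ {1,...,r} with (2/(r−ρ+1)) Σ_{i=ρ}^d a_i ≤ 2 a_{ρ−1} (vacuous if ρ=1), the supremum of Σ_{i=1}^d a_i x_i − (1/4) Σ_{i=1}^r x_i² over x₁ ≥ x₂ ≥ ... ≥ x_d ≥ 0 with x_ρ = x_{ρ+1} = ... = x_d is attained at x_i = 2a_i for i < ρ and x_i = (2/(r−ρ+1)) Σ_{j=ρ}^d a_j for i ≥ ρ, with value Σ_{i=1}^{ρ−1} a_i² + (Σ_{i=ρ}^d a_i)²/(r−ρ+1). -/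
/-!
Once `x` is constant, equal to `t`, on the tail `ρ - 1 ≤ i < d`, the objective separates into
one-dimensional concave quadratics: `a_i x_i - x_i²/4` for each `i < ρ - 1`, and
`S t - m t²/4` with `S = Σ_{i ≥ ρ-1} a_i` and `m = r - ρ + 1` the number of tail indices below `r`.
Completing the square, `s t - m t²/4 ≤ s²/m` with equality at `t = 2s/m`, so every piece is
maximised independently. The maximiser is admissible: `a ≥ 0` makes it nonnegative, and the
hypothesis on `ρ` says exactly that the tail value does not exceed the last leading value
`2 a_{ρ-2}`, which keeps it nonincreasing.
-/

open Finset

theorem mul_sub_mul_sq_div_four_le {m : ℝ} (hm : 0 < m) (s t : ℝ) :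
    s * t - m * t ^ 2 / 4 ≤ s ^ 2 / m := by
  rw [le_div_iff₀ hm]
  nlinarith [sq_nonneg (m * t - 2 * s)]

theorem mul_sub_mul_sq_div_four_eq {m : ℝ} (hm : m ≠ 0) (s : ℝ) :
    s * (2 / m * s) - m * (2 / m * s) ^ 2 / 4 = s ^ 2 / m := by
  field_simp
  ring

theorem sum_mul_sub_sum_sq_eq_of_eq_on_Ico {p r d : ℕ} (hpr : p ≤ r) (hrd : r ≤ d)
    (a x : ℕ → ℝ) {t : ℝ} (hx : ∀ i, p ≤ i → i < d → x i = t) :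
    ∑ i ∈ range d, a i * x i - 1 / 4 * ∑ i ∈ range r, x i ^ 2
      = ∑ i ∈ range p, (a i * x i - x i ^ 2 / 4)
        + ((∑ i ∈ Ico p d, a i) * t - ((r - p : ℕ) : ℝ) * t ^ 2 / 4) := by
  have hxd : ∑ i ∈ Ico p d, a i * x i = (∑ i ∈ Ico p d, a i) * t := by
    rw [sum_mul]
    exact sum_congr rfl fun i hi => by rw [hx i (mem_Ico.mp hi).1 (mem_Ico.mp hi).2]
  have hxr : ∑ i ∈ Ico p r, x i ^ 2 = ((r - p : ℕ) : ℝ) * t ^ 2 := by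
    rw [sum_congr rfl fun i hi => by
      rw [hx i (mem_Ico.mp hi).1 ((mem_Ico.mp hi).2.trans_le hrd)], sum_const, Nat.card_Ico,
      nsmul_eq_mul]
  rw [← sum_range_add_sum_Ico _ (hpr.trans hrd), ← sum_range_add_sum_Ico _ hpr, hxd, hxr,
    sum_sub_distrib, ← sum_div]
  ring

theorem ite_lt_antitone_of_le {β : Type*} [Preorder β] {d p : ℕ} {f : ℕ → β} {c : β}
    (hf : ∀ i j, i ≤ j → j < d → f j ≤ f i) (hc : ∀ i < p, c ≤ f i) :
    ∀ i j, i ≤ j → j < d → (if j < p then f j else c) ≤ (if i < p then f i else c) := by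
  intro i j hij hjd
  split_ifs with hj hi hi
  · exact hf i j hij hjd
  · exact absurd (hij.trans_lt hj) hi
  · exact hc i hi
  · exact le_rfl

theorem stmt12_general (d r ρ : ℕ)
    (hρ1 : 1 ≤ ρ) (hρr : ρ ≤ r) (hrd : r ≤ d)
    (a : ℕ → ℝ) (ha0 : ∀ i, i < d → 0 ≤ a i)
    (hmono : ∀ i j, i ≤ j → j < d → a j ≤ a i)
    (hcond : ρ = 1 ∨
      (2 / ((r : ℝ) - ρ + 1)) * ∑ i ∈ Finset.Ico (ρ - 1) d, a i ≤ 2 * a (ρ - 2)) :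
    (((∑ i ∈ Finset.range d, a i *
          (if i < ρ - 1 then 2 * a i
            else (2 / ((r : ℝ) - ρ + 1)) * ∑ j ∈ Finset.Ico (ρ - 1) d, a j))
        - (1 / 4) * ∑ i ∈ Finset.range r,
          (if i < ρ - 1 then 2 * a i
            else (2 / ((r : ℝ) - ρ + 1)) * ∑ j ∈ Finset.Ico (ρ - 1) d, a j) ^ 2)
      = (∑ i ∈ Finset.range (ρ - 1), (a i) ^ 2)
        + (∑ i ∈ Finset.Ico (ρ - 1) d, a i) ^ 2 / ((r : ℝ) - ρ + 1)) ∧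
    IsGreatest { v : ℝ | ∃ x : ℕ → ℝ,
        (∀ i, i < d → 0 ≤ x i) ∧
        (∀ i j, i ≤ j → j < d → x j ≤ x i) ∧
        (∀ i j, ρ - 1 ≤ i → i < d → ρ - 1 ≤ j → j < d → x i = x j) ∧
        v = (∑ i ∈ Finset.range d, a i * x i)
          - (1 / 4) * ∑ i ∈ Finset.range r, (x i) ^ 2 }
      ((∑ i ∈ Finset.range (ρ - 1), (a i) ^ 2)
        + (∑ i ∈ Finset.Ico (ρ - 1) d, a i) ^ 2 / ((r : ℝ) - ρ + 1)) := by
  set p := ρ - 1 with hp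
  have hpd : p < d := by omega
  have hm : ((r - p : ℕ) : ℝ) = (r : ℝ) - ρ + 1 := by
    rw [Nat.cast_sub (by omega), hp, Nat.cast_sub hρ1]
    ring
  have hm0 : (0 : ℝ) < (r : ℝ) - ρ + 1 := by
    rw [← hm]
    exact_mod_cast Nat.sub_pos_of_lt (by omega)
  set S := ∑ i ∈ Ico p d, a i
  set c := 2 / ((r : ℝ) - ρ + 1) * S
  have hsplit : ∀ (x : ℕ → ℝ) (t : ℝ), (∀ i, p ≤ i → i < d → x i = t) →
      ∑ i ∈ range d, a i * x i - 1 / 4 * ∑ i ∈ range r, x i ^ 2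
        = ∑ i ∈ range p, (a i * x i - x i ^ 2 / 4)
          + (S * t - ((r : ℝ) - ρ + 1) * t ^ 2 / 4) := fun x t hx => by
    rw [sum_mul_sub_sum_sq_eq_of_eq_on_Ico (by omega) hrd a x hx, hm]
  have hvalue := hsplit (fun i => if i < p then 2 * a i else c) c
    fun i hi _ => if_neg (not_lt.mpr hi)
  have hlead : ∑ i ∈ range p, (a i * (if i < p then 2 * a i else c)
      - (if i < p then 2 * a i else c) ^ 2 / 4) = ∑ i ∈ range p, a i ^ 2 :=
    sum_congr rfl fun i hi => by rw [if_pos (mem_range.mp hi)]; ring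
  rw [hlead, mul_sub_mul_sq_div_four_eq hm0.ne'] at hvalue
  have hc0 : 0 ≤ c := by
    have : 0 ≤ S := sum_nonneg fun i hi => ha0 i (mem_Ico.mp hi).2
    positivity
  have hc : ∀ i < p, c ≤ 2 * a i := by
    intro i hi
    rcases hcond with h | h
    · omega
    · exact h.trans (by linarith [hmono i (ρ - 2) (by omega) (by omega)])
  refine ⟨hvalue, ⟨_, ?_, ite_lt_antitone_of_le (fun i j hij hjd => ?_) hc, ?_, hvalue.symm⟩, ?_⟩
  · intro i hi
    split_ifs
    exacts [by linarith [ha0 i hi], hc0]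
  · linarith [hmono i j hij hjd]
  · intro i j hi _ hj _
    simp only [if_neg (not_lt.mpr hi), if_neg (not_lt.mpr hj)]
  · rintro v ⟨x, -, -, hx, rfl⟩
    rw [hsplit x (x p) fun i hi hid => hx i p hi hid le_rfl hpd]
    gcongr ?_ + ?_
    · exact sum_le_sum fun i _ => by simpa using mul_sub_mul_sq_div_four_le one_pos (a i) (x i)
    · exact mul_sub_mul_sq_div_four_le hm0 S (x p)

/-- Core computation in the Fenchel biconjugate of the DropBlock regularizer.
Indices are 0-based: the paper's `a_1 ≥ ... ≥ a_d ≥ 0` is `a 0, ..., a (d-1)` here.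
For `ρ ∈ {1,...,r}` with `(2/(r−ρ+1)) Σ_{i=ρ}^d a_i ≤ 2 a_{ρ−1}` (vacuous if `ρ = 1`),
the supremum of `Σ a_i x_i − (1/4) Σ_{i≤r} x_i²` over nonincreasing nonnegative `x`
constant on indices `≥ ρ` is attained at `x_i = 2a_i` (`i < ρ`),
`x_i = (2/(r−ρ+1)) Σ_{j≥ρ} a_j` (`i ≥ ρ`), with value
`Σ_{i<ρ} a_i² + (Σ_{i≥ρ} a_i)²/(r−ρ+1)`. -/
theorem stmt12 (d r ρ : ℕ) (β : ℝ) (hβ : 0 < β)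
    (hρ1 : 1 ≤ ρ) (hρr : ρ ≤ r) (hrd : r ≤ d)
    (a : ℕ → ℝ) (ha0 : ∀ i, i < d → 0 ≤ a i)
    (hmono : ∀ i j, i ≤ j → j < d → a j ≤ a i)
    (hcond : ρ = 1 ∨
      (2 / ((r : ℝ) - ρ + 1)) * ∑ i ∈ Finset.Ico (ρ - 1) d, a i ≤ 2 * a (ρ - 2)) :
    (((∑ i ∈ Finset.range d, a i *
          (if i < ρ - 1 then 2 * a i
            else (2 / ((r : ℝ) - ρ + 1)) * ∑ j ∈ Finset.Ico (ρ - 1) d, a j))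
        - (1 / 4) * ∑ i ∈ Finset.range r,
          (if i < ρ - 1 then 2 * a i
            else (2 / ((r : ℝ) - ρ + 1)) * ∑ j ∈ Finset.Ico (ρ - 1) d, a j) ^ 2)
      = (∑ i ∈ Finset.range (ρ - 1), (a i) ^ 2)
        + (∑ i ∈ Finset.Ico (ρ - 1) d, a i) ^ 2 / ((r : ℝ) - ρ + 1)) ∧
    IsGreatest { v : ℝ | ∃ x : ℕ → ℝ,
        (∀ i, i < d → 0 ≤ x i) ∧
        (∀ i j, i ≤ j → j < d → x j ≤ x i) ∧
        (∀ i j, ρ - 1 ≤ i → i < d → ρ - 1 ≤ j → j < d → x i = x j) ∧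
        v = (∑ i ∈ Finset.range d, a i * x i)
          - (1 / 4) * ∑ i ∈ Finset.range r, (x i) ^ 2 }
      ((∑ i ∈ Finset.range (ρ - 1), (a i) ^ 2)
        + (∑ i ∈ Finset.Ico (ρ - 1) d, a i) ^ 2 / ((r : ℝ) - ρ + 1)) :=
  stmt12_general d r ρ hρ1 hρr hrd a ha0 hmono hcond
end
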